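/- Neither W(A₄) × W(I₂(5)) (isomorphic to Sym(5) × Dih(5)) nor W(A₅) × W(I₂(5)) (isomorphic to Sym(6) × Dih(5)) is a Beauville group. -/

import Mathlib

/-- `beauvilleSigma g h` is the set `Σ(g,h)`: the union over all integers `i` and all
`k` in the group of the conjugates `k⁻¹ gⁱ k`, `k⁻¹ hⁱ k` and `k⁻¹ (gh)ⁱ k`. -/
def beauvilleSigma {G : Type*} [Group G] (g h : G) : Set G :=
  {w | ∃ (i : ℤ) (k : G),
    w = k⁻¹ * g ^ i * k ∨ w = k⁻¹ * h ^ i * k ∨ w = k⁻¹ * (g * h) ^ i * k}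

/-- `{x₁,y₁}, {x₂,y₂}` is an (unmixed) Beauville structure on `G`:
both pairs generate `G` and `Σ(x₁,y₁) ∩ Σ(x₂,y₂) = {1}`. -/
def IsBeauvilleStructure {G : Type*} [Group G] (x₁ y₁ x₂ y₂ : G) : Prop :=
  Subgroup.closure {x₁, y₁} = ⊤ ∧ Subgroup.closure {x₂, y₂} = ⊤ ∧
    beauvilleSigma x₁ y₁ ∩ beauvilleSigma x₂ y₂ = {1}

/-- A group is a Beauville group if it admits a Beauville structure. -/
def IsBeauvilleGroup (G : Type*) [Group G] : Prop :=
  ∃ x₁ y₁ x₂ y₂ : G, IsBeauvilleStructure x₁ y₁ x₂ y₂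

/-- A group is a strongly real Beauville group if it admits a Beauville structure
`{x₁,y₁}, {x₂,y₂}` together with an automorphism `φ` and elements `g₁, g₂` such that
`gᵢ φ(xᵢ) gᵢ⁻¹ = xᵢ⁻¹` and `gᵢ φ(yᵢ) gᵢ⁻¹ = yᵢ⁻¹` for `i = 1, 2`. -/
def IsStronglyRealBeauvilleGroup (G : Type*) [Group G] : Prop :=
  ∃ x₁ y₁ x₂ y₂ : G, IsBeauvilleStructure x₁ y₁ x₂ y₂ ∧
    ∃ (φ : G ≃* G) (g₁ g₂ : G),
      g₁ * φ x₁ * g₁⁻¹ = x₁⁻¹ ∧ g₁ * φ y₁ * g₁⁻¹ = y₁⁻¹ ∧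
      g₂ * φ x₂ * g₂⁻¹ = x₂⁻¹ ∧ g₂ * φ y₂ * g₂⁻¹ = y₂⁻¹

/-!
`W(Aₙ) ≅ Sym(n+1)`: the adjacent transpositions satisfy the Coxeter relations and generate
`Sym(n+1)`, while the cosets `W(Aₙ₋₁) · sₙ sₙ₋₁ ⋯ sₖ` cover `W(Aₙ)`, so `|W(Aₙ)| ≤ (n+1)!`.
Also `W(I₂(m)) ≅ Dih(m+2)`.

Let `{x, y}` generate `G = Sym(m) × Dih(p)` with `p` an odd prime and `m ≤ p + 1`. The
dihedral part of one of `x`, `y`, `xy`, say of `u`, is a nontrivial rotation, since otherwise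
`x` and `y` would project into a cyclic subgroup of `Dih(p)`. The map `G → {±1} × {±1}` given
by the sign and the reflection character is onto the Klein four-group, which is not cyclic, so
it does not kill `u`; hence the `Sym(m)`-part of `u` is odd. For `m ≤ p + 1` an element of order
divisible by `p` is a `p`-cycle, which is even, so a power of `u` is `(1, r 1)`. Thus `(1, r 1)`
lies in `Σ(x, y)` for every generating pair and no two such sets meet trivially.
-/

open DihedralGroup

theorem isCyclic_of_closure_pair_eq_top {G : Type*} [Group G] {a b g : G}
    (hab : Subgroup.closure {a, b} = ⊤) (ha : a ∈ Subgroup.zpowers g)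
    (hb : b ∈ Subgroup.zpowers g) : IsCyclic G := by
  refine ⟨g, fun w => ?_⟩
  have hle : Subgroup.closure {a, b} ≤ Subgroup.zpowers g := by
    rw [Subgroup.closure_le, Set.insert_subset_iff, Set.singleton_subset_iff]
    exact ⟨ha, hb⟩
  exact hle (hab ▸ Subgroup.mem_top w)

theorem Subgroup.closure_pair_eq_top_of_surjective {G K : Type*} [Group G] [Group K]
    {f : G →* K} (hf : Function.Surjective f) {x y : G} (hxy : Subgroup.closure {x, y} = ⊤) :
    Subgroup.closure {f x, f y} = ⊤ := by
  rw [← Set.image_pair, ← MonoidHom.map_closure, hxy, Subgroup.map_top_of_surjective f hf]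

theorem MonoidHom.ne_one_of_closure_pair_eq_top {G K : Type*} [Group G] [Group K]
    (hK : ¬ IsCyclic K) {q : G →* K} (hq : Function.Surjective q) {x y u : G}
    (hxy : Subgroup.closure {x, y} = ⊤) (hu : u ∈ ({x, y, x * y} : Set G)) : q u ≠ 1 := by
  have hqxy := Subgroup.closure_pair_eq_top_of_surjective hq hxy
  intro h1
  rcases hu with rfl | rfl | rfl
  · exact hK (isCyclic_of_closure_pair_eq_top hqxy (h1 ▸ one_mem _) (Subgroup.mem_zpowers _))
  · exact hK (isCyclic_of_closure_pair_eq_top hqxy (Subgroup.mem_zpowers _) (h1 ▸ one_mem _))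
  · rw [map_mul, mul_eq_one_iff_eq_inv] at h1
    refine hK (isCyclic_of_closure_pair_eq_top hqxy ?_ (Subgroup.mem_zpowers _))
    rw [h1]
    exact inv_mem (Subgroup.mem_zpowers (q y))

theorem not_isCyclic_units_int_prod : ¬ IsCyclic (ℤˣ × ℤˣ) := fun h => by
  have := coprime_card_of_isCyclic_prod ℤˣ ℤˣ
  simp [Nat.card_eq_fintype_card, Fintype.card_units_int] at this

theorem zpow_mem_beauvilleSigma {G : Type*} [Group G] {x y u : G}
    (hu : u ∈ ({x, y, x * y} : Set G)) (i : ℤ) : u ^ i ∈ beauvilleSigma x y :=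
  ⟨i, 1, by rcases hu with rfl | rfl | rfl <;> simp⟩

theorem image_beauvilleSigma {G K F : Type*} [Group G] [Group K] [FunLike F G K]
    [MonoidHomClass F G K] {f : F} (hf : Function.Surjective f) (x y : G) :
    f '' beauvilleSigma x y = beauvilleSigma (f x) (f y) := by
  ext w
  constructor
  · rintro ⟨v, ⟨i, k, hv⟩, rfl⟩
    exact ⟨i, f k, by rcases hv with rfl | rfl | rfl <;> simp⟩
  · rintro ⟨i, k', hw⟩
    obtain ⟨k, rfl⟩ := hf k'
    rcases hw with rfl | rfl | rfl
    exacts [⟨_, ⟨i, k, Or.inl rfl⟩, by simp⟩,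
      ⟨_, ⟨i, k, Or.inr (Or.inl rfl)⟩, by simp⟩,
      ⟨_, ⟨i, k, Or.inr (Or.inr rfl)⟩, by simp⟩]

theorem IsBeauvilleGroup.of_mulEquiv {G K : Type*} [Group G] [Group K] (e : G ≃* K)
    (h : IsBeauvilleGroup G) : IsBeauvilleGroup K := by
  obtain ⟨x₁, y₁, x₂, y₂, h₁, h₂, hdisj⟩ := h
  refine ⟨e x₁, e y₁, e x₂, e y₂, ?_, ?_, ?_⟩
  · exact Subgroup.closure_pair_eq_top_of_surjective (f := e.toMonoidHom) e.surjective h₁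
  · exact Subgroup.closure_pair_eq_top_of_surjective (f := e.toMonoidHom) e.surjective h₂
  · rw [← image_beauvilleSigma e.surjective, ← image_beauvilleSigma e.surjective,
      ← Set.image_inter e.injective, hdisj, Set.image_singleton, map_one]

theorem pow_val_add_of_pow_eq_one {M : Type*} [Monoid M] {n : ℕ} [NeZero n] {c : M}
    (hc : c ^ n = 1) (i j : ZMod n) : c ^ (i + j).val = c ^ i.val * c ^ j.val := by
  rw [ZMod.val_add, ← pow_add, ← pow_eq_pow_mod _ hc]

theorem pow_val_sub_of_pow_eq_one {G : Type*} [Group G] {n : ℕ} [NeZero n] {c : G}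
    (hc : c ^ n = 1) (i j : ZMod n) : c ^ (j - i).val = (c ^ i.val)⁻¹ * c ^ j.val := by
  rw [eq_inv_mul_iff_mul_eq, ← pow_val_add_of_pow_eq_one hc, add_sub_cancel]

namespace DihedralGroup

variable {n : ℕ}

def reflectionSign : DihedralGroup n →* ℤˣ where
  toFun
    | r _ => 1
    | sr _ => -1
  map_one' := rfl
  map_mul' x y := by cases x <;> cases y <;> simp [r_mul_r, r_mul_sr, sr_mul_r, sr_mul_sr]

@[simp] theorem reflectionSign_r (i : ZMod n) : reflectionSign (r i) = 1 := rfl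

theorem reflectionSign_surjective : Function.Surjective (reflectionSign (n := n)) := by
  intro u
  rcases Int.units_eq_one_or u with rfl | rfl
  exacts [⟨r 0, rfl⟩, ⟨sr 0, rfl⟩]

theorem exists_r_mem_of_closure_pair_eq_top (hn : n ≠ 1) {x y : DihedralGroup n}
    (hxy : Subgroup.closure {x, y} = ⊤) :
    ∃ t ≠ 0, r t ∈ ({x, y, x * y} : Set (DihedralGroup n)) := by
  by_contra! h
  have hr : ∀ {t}, r t ∈ ({x, y, x * y} : Set (DihedralGroup n)) → t = 0 :=
    fun ht => not_not.1 fun h' => h _ h' ht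
  suffices ∃ j, x ∈ Subgroup.zpowers (sr j) ∧ y ∈ Subgroup.zpowers (sr j) by
    obtain ⟨j, hx, hy⟩ := this
    exact not_isCyclic hn (isCyclic_of_closure_pair_eq_top hxy hx hy)
  have hmem : ∀ j : ZMod n, sr j ∈ Subgroup.zpowers (sr j) := fun j => Subgroup.mem_zpowers _
  rcases x with i | i <;> rcases y with k | k
  · obtain rfl : i = 0 := hr (by simp)
    obtain rfl : k = 0 := hr (by simp)
    exact ⟨0, by simp [r_zero, one_mem]⟩
  · obtain rfl : i = 0 := hr (by simp)
    exact ⟨k, by simp [r_zero, one_mem, hmem]⟩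
  · obtain rfl : k = 0 := hr (by simp)
    exact ⟨i, by simp [r_zero, one_mem, hmem]⟩
  · obtain rfl : k = i := sub_eq_zero.mp (hr (by simp [sr_mul_sr]))
    exact ⟨k, hmem k, hmem k⟩

variable {G : Type*} [Group G] [NeZero n]

def lift (a c : G) (ha : a * a = 1) (hc : c ^ n = 1) (hac : a * c * a = c⁻¹) :
    DihedralGroup n →* G where
  toFun
    | r i => c ^ i.val
    | sr i => a * c ^ i.val
  map_one' := by simp [← r_zero]
  map_mul' := by
    have ha' : a⁻¹ = a := inv_eq_of_mul_eq_one_left ha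
    have hconj : ∀ k : ℕ, a * c ^ k * a = (c ^ k)⁻¹ := fun k => by
      nth_rw 2 [← ha']
      rw [← conj_pow, ha', hac, inv_pow]
    rintro (i | i) (j | j)
    · exact pow_val_add_of_pow_eq_one hc i j
    · show a * c ^ (j - i).val = c ^ i.val * (a * c ^ j.val)
      rw [pow_val_sub_of_pow_eq_one hc, ← hconj, ← mul_assoc, ← mul_assoc, ← mul_assoc, ha,
        one_mul, mul_assoc]
    · show a * c ^ (i + j).val = a * c ^ i.val * c ^ j.val
      rw [pow_val_add_of_pow_eq_one hc, mul_assoc]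
    · show c ^ (j - i).val = a * c ^ i.val * (a * c ^ j.val)
      rw [pow_val_sub_of_pow_eq_one hc, ← hconj, mul_assoc]

@[simp] theorem lift_r (a c : G) (ha : a * a = 1) (hc : c ^ n = 1) (hac : a * c * a = c⁻¹)
    (i : ZMod n) : lift a c ha hc hac (r i) = c ^ i.val := rfl

@[simp] theorem lift_sr (a c : G) (ha : a * a = 1) (hc : c ^ n = 1) (hac : a * c * a = c⁻¹)
    (i : ZMod n) : lift a c ha hc hac (sr i) = a * c ^ i.val := rfl

end DihedralGroup

section ProdDihedralGroup

variable {H : Type*} [Group H] {p : ℕ} [Fact p.Prime]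

theorem exists_pow_eq_mk_one_r_one {a : H} (ha : ¬ p ∣ orderOf a) {t : ZMod p} (ht : t ≠ 0) :
    ∃ i : ℕ, (a, r t) ^ i = (1, r 1) := by
  have hN : (orderOf a : ZMod p) ≠ 0 := by rwa [Ne, ZMod.natCast_eq_zero_iff]
  refine ⟨orderOf a * ((orderOf a : ZMod p) * t)⁻¹.val, ?_⟩
  rw [Prod.pow_mk, pow_mul, pow_orderOf_eq_one, one_pow, r_pow]
  congr
  push_cast
  rw [ZMod.natCast_zmod_val, ← mul_assoc, mul_comm t, mul_inv_cancel₀ (mul_ne_zero hN ht)]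

theorem mk_one_r_one_mem_beauvilleSigma (σ : H →* ℤˣ) (hσ : Function.Surjective σ)
    (hker : ∀ a : H, p ∣ orderOf a → σ a = 1) {x y : H × DihedralGroup p}
    (hxy : Subgroup.closure {x, y} = ⊤) :
    ((1 : H), (r 1 : DihedralGroup p)) ∈ beauvilleSigma x y := by
  obtain ⟨t, ht, hrt⟩ := exists_r_mem_of_closure_pair_eq_top (Fact.out : p.Prime).ne_one
    (Subgroup.closure_pair_eq_top_of_surjective (f := MonoidHom.snd H _) Prod.snd_surjective
      hxy)
  obtain ⟨u, hu, hu2⟩ : ∃ u ∈ ({x, y, x * y} : Set _), u.2 = r t := by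
    rcases hrt with h | h | h
    exacts [⟨x, by simp, h.symm⟩, ⟨y, by simp, h.symm⟩, ⟨x * y, by simp, h.symm⟩]
  have hσu : σ u.1 ≠ 1 := by
    have := (MonoidHom.prodMap σ reflectionSign).ne_one_of_closure_pair_eq_top
      not_isCyclic_units_int_prod (hσ.prodMap reflectionSign_surjective) hxy hu
    simpa [Prod.ext_iff, hu2] using this
  obtain ⟨i, hi⟩ := exists_pow_eq_mk_one_r_one (mt (hker u.1) hσu) ht
  rw [← hi, ← hu2, ← zpow_natCast]
  exact zpow_mem_beauvilleSigma hu i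

theorem not_isBeauvilleGroup_prod_dihedralGroup (σ : H →* ℤˣ) (hσ : Function.Surjective σ)
    (hker : ∀ a : H, p ∣ orderOf a → σ a = 1) :
    ¬ IsBeauvilleGroup (H × DihedralGroup p) := by
  rintro ⟨x₁, y₁, x₂, y₂, h₁, h₂, hdisj⟩
  have hmem := Set.mem_inter (mk_one_r_one_mem_beauvilleSigma σ hσ hker h₁)
    (mk_one_r_one_mem_beauvilleSigma σ hσ hker h₂)
  rw [hdisj, Set.mem_singleton_iff] at hmem
  have hr : (r 1 : DihedralGroup p) = r 0 := congrArg Prod.snd hmem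
  exact one_ne_zero (r.inj hr)

end ProdDihedralGroup

theorem Equiv.Perm.sign_eq_one_of_prime_dvd_orderOf {α : Type*} [Fintype α] [DecidableEq α]
    {p : ℕ} (hp : p.Prime) (hp2 : p ≠ 2) (hcard : Fintype.card α < p + 2) {σ : Perm α}
    (hσ : p ∣ orderOf σ) : Perm.sign σ = 1 := by
  rw [← lcm_cycleType] at hσ
  obtain ⟨l, hl, hpl⟩ := hp.prime.exists_mem_multiset_dvd
    (hσ.trans (Multiset.lcm_dvd.2 fun _ => Multiset.dvd_prod))
  have hlp : l = p := by
    have hle := (le_card_support_of_mem_cycleType hl).trans σ.support.card_le_univ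
    obtain ⟨c, rfl⟩ := hpl
    have := two_le_of_mem_cycleType hl
    rcases c with _ | _ | c
    · simp at this
    · simp
    · nlinarith [hp.two_le]
  subst hlp
  rw [sign_of_cycleType, cycleType_of_card_le_mem_cycleType_add_two hcard hl]
  simp [(hp.eq_two_or_odd'.resolve_left hp2).add_one.neg_one_pow]

theorem Equiv.Perm.not_isBeauvilleGroup_prod_dihedralGroup {m p : ℕ} [Fact p.Prime]
    (hp2 : p ≠ 2) (hm : 2 ≤ m) (hmp : m < p + 2) :
    ¬ IsBeauvilleGroup (Perm (Fin m) × DihedralGroup p) :=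
  have : Nontrivial (Fin m) := Fin.nontrivial_iff_two_le.2 hm
  _root_.not_isBeauvilleGroup_prod_dihedralGroup sign (sign_surjective _) fun σ =>
    sign_eq_one_of_prime_dvd_orderOf (σ := σ) Fact.out hp2 (by simpa using hmp)

namespace CoxeterSystem

variable {B W : Type*} [Group W] {M : CoxeterMatrix B} (cs : CoxeterSystem M W)

theorem commute_simple_of_eq_two {i j : B} (h : M i j = 2) :
    Commute (cs.simple i) (cs.simple j) := by
  unfold Commute SemiconjBy
  simpa [braidWord, h, M.symmetric j i, alternatingWord, wordProd] using
    cs.wordProd_braidWord_eq i j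

theorem simple_braid_of_eq_three {i j : B} (h : M i j = 3) :
    cs.simple i * cs.simple j * cs.simple i = cs.simple j * cs.simple i * cs.simple j := by
  simpa [braidWord, h, M.symmetric j i, alternatingWord, wordProd, mul_assoc] using
    (cs.wordProd_braidWord_eq i j).symm

end CoxeterSystem

namespace CoxeterMatrix

open CoxeterSystem

variable (m : ℕ)

theorem I_isLiftable_sr :
    (CoxeterMatrix.I m).IsLiftable (![sr 0, sr 1] : Fin 2 → DihedralGroup (m + 2)) := by
  intro i j
  fin_cases i <;> fin_cases j <;> simp [CoxeterMatrix.I, sr_mul_sr, r_pow]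

noncomputable def I.toDihedralGroup : (CoxeterMatrix.I m).Group →* DihedralGroup (m + 2) :=
  (CoxeterMatrix.I m).toCoxeterSystem.lift ⟨_, I_isLiftable_sr m⟩

@[simp] theorem I.toDihedralGroup_simple (i : Fin 2) :
    I.toDihedralGroup m ((CoxeterMatrix.I m).simple i) = ![sr 0, sr 1] i :=
  lift_apply_simple _ _ i

noncomputable def I.ofDihedralGroup : DihedralGroup (m + 2) →* (CoxeterMatrix.I m).Group :=
  let cs := (CoxeterMatrix.I m).toCoxeterSystem
  DihedralGroup.lift (cs.simple 0) (cs.simple 0 * cs.simple 1) (cs.simple_mul_simple_self 0)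
    (cs.simple_mul_simple_pow 0 1)
    (by rw [mul_inv_rev, cs.inv_simple, cs.inv_simple, cs.simple_mul_simple_cancel_left])

theorem I.ofDihedralGroup_sr (i : ZMod (m + 2)) :
    I.ofDihedralGroup m (sr i) = (CoxeterMatrix.I m).simple 0 *
      ((CoxeterMatrix.I m).simple 0 * (CoxeterMatrix.I m).simple 1) ^ i.val :=
  rfl

theorem I.ofDihedralGroup_comp_toDihedralGroup :
    (I.ofDihedralGroup m).comp (I.toDihedralGroup m) = MonoidHom.id _ := by
  refine (CoxeterMatrix.I m).toCoxeterSystem.ext_simple fun i => ?_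
  fin_cases i
  · simp [I.ofDihedralGroup]
  · show I.ofDihedralGroup m (I.toDihedralGroup m ((CoxeterMatrix.I m).simple 1)) =
      (CoxeterMatrix.I m).simple 1
    have h1 : (1 : ZMod (m + 2)).val = 1 :=
      ZMod.val_one_eq_one_mod _ ▸ Nat.one_mod_eq_one.2 (by omega)
    rw [I.toDihedralGroup_simple, Matrix.cons_val_one, Matrix.cons_val_fin_one,
      I.ofDihedralGroup_sr, h1, pow_one]
    exact (CoxeterMatrix.I m).toCoxeterSystem.simple_mul_simple_cancel_left 0

theorem I.toDihedralGroup_comp_ofDihedralGroup :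
    (I.toDihedralGroup m).comp (I.ofDihedralGroup m) = MonoidHom.id _ := by
  ext (i | i)
  · simp [I.ofDihedralGroup]
  · simp [I.ofDihedralGroup]

noncomputable def I.mulEquivDihedralGroup : (CoxeterMatrix.I m).Group ≃* DihedralGroup (m + 2) :=
  MonoidHom.toMulEquiv _ _ (I.ofDihedralGroup_comp_toDihedralGroup m)
    (I.toDihedralGroup_comp_ofDihedralGroup m)

end CoxeterMatrix

open Equiv Equiv.Perm in
theorem Equiv.swap_mul_swap_pow_three {α : Type*} [Fintype α] [DecidableEq α] {a b c : α}
    (hab : a ≠ b) (hac : a ≠ c) (hbc : b ≠ c) : (swap a b * swap a c) ^ 3 = 1 :=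
  (isThreeCycle_swap_mul_swap_same hab hac hbc).orderOf ▸ pow_orderOf_eq_one _

open Equiv Equiv.Perm in
theorem Equiv.swap_mul_swap_pow_two {α : Type*} [DecidableEq α] {a b c d : α}
    (h : [a, b, c, d].Nodup) : (swap a b * swap c d) ^ 2 = 1 := by
  rw [(disjoint_swap_swap h).commute.mul_pow, sq, sq, swap_mul_self, swap_mul_self, one_mul]

namespace CoxeterMatrix

open Equiv CoxeterSystem

variable {n : ℕ}

theorem A_apply_of_add_one_eq {i j : Fin n} (h : i.val + 1 = j.val) :
    CoxeterMatrix.A n i j = 3 := by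
  simp only [CoxeterMatrix.A, Matrix.of_apply, Fin.ext_iff]
  split_ifs <;> omega

theorem A_apply_of_add_two_le {i j : Fin n} (h : i.val + 2 ≤ j.val) :
    CoxeterMatrix.A n i j = 2 := by
  simp only [CoxeterMatrix.A, Matrix.of_apply, Fin.ext_iff]
  split_ifs <;> omega

variable (n) in
theorem A_isLiftable_swap :
    (CoxeterMatrix.A n).IsLiftable fun i : Fin n => swap i.castSucc i.succ := by
  intro i j
  dsimp only
  obtain rfl | h | h | h | h : i = j ∨ i.val + 1 = j.val ∨ j.val + 1 = i.val ∨
      i.val + 2 ≤ j.val ∨ j.val + 2 ≤ i.val := by omega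
  · simp
  · rw [A_apply_of_add_one_eq h, show j.castSucc = i.succ from Fin.ext (by simp; omega),
      swap_comm i.castSucc]
    exact swap_mul_swap_pow_three (by simp [Fin.ext_iff]) (by simp [Fin.ext_iff]; omega)
      (by simp [Fin.ext_iff]; omega)
  · rw [(CoxeterMatrix.A n).symmetric, A_apply_of_add_one_eq h,
      show i.castSucc = j.succ from Fin.ext (by simp; omega), swap_comm j.castSucc]
    exact swap_mul_swap_pow_three (by simp [Fin.ext_iff]; omega) (by simp [Fin.ext_iff])
      (by simp [Fin.ext_iff]; omega)
  · rw [A_apply_of_add_two_le h]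
    exact swap_mul_swap_pow_two (by simp [Fin.ext_iff]; omega)
  · rw [(CoxeterMatrix.A n).symmetric, A_apply_of_add_two_le h]
    exact swap_mul_swap_pow_two (by simp [Fin.ext_iff]; omega)

theorem A_apply_castSucc (i j : Fin n) :
    CoxeterMatrix.A (n + 1) i.castSucc j.castSucc = CoxeterMatrix.A n i j := by
  simp [CoxeterMatrix.A]

variable (n)

noncomputable def A.toPerm : (CoxeterMatrix.A n).Group →* Perm (Fin (n + 1)) :=
  (CoxeterMatrix.A n).toCoxeterSystem.lift ⟨_, A_isLiftable_swap n⟩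

@[simp] theorem A.toPerm_simple (i : Fin n) :
    A.toPerm n ((CoxeterMatrix.A n).simple i) = swap i.castSucc i.succ :=
  lift_apply_simple _ _ i

theorem A.toPerm_surjective : Function.Surjective (A.toPerm n) := by
  rw [← MonoidHom.range_eq_top, eq_top_iff,
    ← Subgroup.closure_eq_top_of_mclosure_eq_top (Perm.mclosure_swap_castSucc_succ n),
    Subgroup.closure_le]
  rintro _ ⟨i, rfl⟩
  exact ⟨_, A.toPerm_simple n i⟩

noncomputable def A.castSuccHom :
    (CoxeterMatrix.A n).Group →* (CoxeterMatrix.A (n + 1)).Group :=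
  (CoxeterMatrix.A n).toCoxeterSystem.lift ⟨fun i => (CoxeterMatrix.A (n + 1)).simple i.castSucc,
    fun i j => by
      rw [← A_apply_castSucc]
      exact (CoxeterMatrix.A (n + 1)).toCoxeterSystem.simple_mul_simple_pow _ _⟩

@[simp] theorem A.castSuccHom_simple (i : Fin n) :
    A.castSuccHom n ((CoxeterMatrix.A n).simple i) =
      (CoxeterMatrix.A (n + 1)).simple i.castSucc :=
  lift_apply_simple _ _ i

/-- `sₙ sₙ₋₁ ⋯ sₖ`; these are coset representatives of `W(Aₙ)` in `W(Aₙ₊₁)`. -/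
noncomputable def A.descProd (k : ℕ) : (CoxeterMatrix.A (n + 1)).Group :=
  if h : k ≤ n then A.descProd (k + 1) * (CoxeterMatrix.A (n + 1)).simple ⟨k, by omega⟩ else 1
termination_by n + 1 - k

variable {n}

theorem A.descProd_of_le {k : ℕ} (h : k ≤ n) :
    A.descProd n k = A.descProd n (k + 1) * (CoxeterMatrix.A (n + 1)).simple ⟨k, by omega⟩ := by
  rw [A.descProd, dif_pos h]

theorem A.descProd_of_lt {k : ℕ} (h : n < k) : A.descProd n k = 1 := by
  rw [A.descProd, dif_neg (by omega)]

theorem A.commute_simple {i j : Fin n} (h : i.val + 2 ≤ j.val) :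
    Commute ((CoxeterMatrix.A n).simple i) ((CoxeterMatrix.A n).simple j) :=
  (CoxeterMatrix.A n).toCoxeterSystem.commute_simple_of_eq_two (A_apply_of_add_two_le h)

theorem A.simple_braid {i j : Fin n} (h : i.val + 1 = j.val) :
    (CoxeterMatrix.A n).simple i * (CoxeterMatrix.A n).simple j * (CoxeterMatrix.A n).simple i =
      (CoxeterMatrix.A n).simple j * (CoxeterMatrix.A n).simple i * (CoxeterMatrix.A n).simple j :=
  (CoxeterMatrix.A n).toCoxeterSystem.simple_braid_of_eq_three (A_apply_of_add_one_eq h)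

theorem A.commute_descProd_simple {k : ℕ} {i : Fin (n + 1)} (h : i.val + 2 ≤ k) :
    Commute (A.descProd n k) ((CoxeterMatrix.A (n + 1)).simple i) := by
  by_cases hk : k ≤ n
  · rw [A.descProd_of_le hk]
    exact (A.commute_descProd_simple (by omega)).mul_left
      (A.commute_simple (i := i) (j := ⟨k, by omega⟩) h).symm
  · rw [A.descProd_of_lt (by omega)]
    exact Commute.one_left _
termination_by n + 1 - k

theorem A.descProd_mul_simple_of_lt {k : ℕ} {i : Fin (n + 1)} (h : k < i.val) :
    A.descProd n k * (CoxeterMatrix.A (n + 1)).simple i =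
      (CoxeterMatrix.A (n + 1)).simple ⟨i.val - 1, by omega⟩ * A.descProd n k := by
  rw [A.descProd_of_le (by omega)]
  obtain ⟨i, hi⟩ := i
  dsimp only at h
  by_cases hki : k + 1 = i
  · subst hki
    -- with `d = A.descProd n (k + 2)`: `d sₖ₊₁ sₖ sₖ₊₁ = d sₖ sₖ₊₁ sₖ = sₖ d sₖ₊₁ sₖ`
    rw [A.descProd_of_le (k := k + 1) (by omega), mul_assoc, mul_assoc,
      ← mul_assoc _ _ ((CoxeterMatrix.A (n + 1)).simple _),
      ← A.simple_braid (i := ⟨k, by omega⟩) (j := ⟨k + 1, by omega⟩) rfl, ← mul_assoc,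
      ← mul_assoc, (A.commute_descProd_simple (k := k + 2) (i := ⟨k, by omega⟩) le_rfl).eq]
    simp only [mul_assoc, Nat.add_sub_cancel]
  · rw [mul_assoc,
      (A.commute_simple (i := ⟨k, by omega⟩) (j := ⟨i, hi⟩) (by dsimp only; omega)).eq,
      ← mul_assoc, A.descProd_mul_simple_of_lt (by dsimp only; omega), mul_assoc]
termination_by n + 1 - k

theorem A.exists_eq_castSuccHom_mul_descProd (w : (CoxeterMatrix.A (n + 1)).Group) :
    ∃ (v : (CoxeterMatrix.A n).Group) (k : Fin (n + 2)),
      w = A.castSuccHom n v * A.descProd n k := by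
  induction w using (CoxeterMatrix.A (n + 1)).toCoxeterSystem.simple_induction_right with
  | one => exact ⟨1, Fin.last _, by rw [map_one, one_mul, A.descProd_of_lt (by simp)]⟩
  | mul_simple_right w i ih =>
    obtain ⟨v, k, rfl⟩ := ih
    obtain ⟨i, hi⟩ := i
    obtain ⟨k, hk⟩ := k
    simp only [toCoxeterSystem_simple, mul_assoc]
    obtain h | rfl | rfl | h : i + 2 ≤ k ∨ i + 1 = k ∨ i = k ∨ k < i := by omega
    · refine ⟨v * (CoxeterMatrix.A n).simple ⟨i, by omega⟩, ⟨k, hk⟩, ?_⟩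
      rw [(A.commute_descProd_simple (i := ⟨i, hi⟩) h).eq, map_mul, A.castSuccHom_simple,
        mul_assoc]
      rfl
    · exact ⟨v, ⟨i, by omega⟩, by rw [← A.descProd_of_le (by omega)]⟩
    · refine ⟨v, ⟨i + 1, by omega⟩, ?_⟩
      rw [A.descProd_of_le (by omega)]
      exact congrArg _
        ((CoxeterMatrix.A (n + 1)).toCoxeterSystem.simple_mul_simple_cancel_right _)
    · refine ⟨v * (CoxeterMatrix.A n).simple ⟨i - 1, by omega⟩, ⟨k, hk⟩, ?_⟩
      rw [A.descProd_mul_simple_of_lt (i := ⟨i, hi⟩) h, map_mul, A.castSuccHom_simple,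
        mul_assoc]
      rfl

open Nat in
theorem A.finite_and_card_le (n : ℕ) :
    Finite (CoxeterMatrix.A n).Group ∧ Nat.card (CoxeterMatrix.A n).Group ≤ (n + 1)! := by
  induction n with
  | zero =>
    have h : ∀ u : (CoxeterMatrix.A 0).Group, u = 1 := fun u =>
      (CoxeterMatrix.A 0).toCoxeterSystem.simple_induction_right (p := (· = 1)) u rfl
        fun _ i => i.elim0
    have : Subsingleton (CoxeterMatrix.A 0).Group := ⟨fun v w => by rw [h v, h w]⟩
    exact ⟨inferInstance, (Nat.card_of_subsingleton 1).le⟩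
  | succ n ih =>
    obtain ⟨_, hcard⟩ := ih
    have hsurj : Function.Surjective fun vk : (CoxeterMatrix.A n).Group × Fin (n + 2) =>
        A.castSuccHom n vk.1 * A.descProd n vk.2 := fun w => by
      obtain ⟨v, k, rfl⟩ := A.exists_eq_castSuccHom_mul_descProd w
      exact ⟨(v, k), rfl⟩
    refine ⟨Finite.of_surjective _ hsurj, ?_⟩
    calc Nat.card (CoxeterMatrix.A (n + 1)).Group
        ≤ Nat.card ((CoxeterMatrix.A n).Group × Fin (n + 2)) :=
          Nat.card_le_card_of_surjective _ hsurj
      _ = Nat.card (CoxeterMatrix.A n).Group * (n + 2) := by simp [Nat.card_prod]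
      _ ≤ (n + 1)! * (n + 2) := by gcongr
      _ = (n + 2)! := by rw [factorial_succ (n + 1)]; ring

variable (n) in
noncomputable def A.mulEquivPerm : (CoxeterMatrix.A n).Group ≃* Perm (Fin (n + 1)) :=
  have := (A.finite_and_card_le n).1
  MulEquiv.ofBijective (A.toPerm n) <| (A.toPerm_surjective n).bijective_of_nat_card_le <| by
    simpa [Fintype.card_perm] using (A.finite_and_card_le n).2

end CoxeterMatrix

/-- `CoxeterMatrix.I 3` is the Coxeter matrix of type `I₂(5)`. -/
theorem stmt_17 :
    ¬ IsBeauvilleGroup ((CoxeterMatrix.A 4).Group × (CoxeterMatrix.I 3).Group) ∧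
    ¬ IsBeauvilleGroup ((CoxeterMatrix.A 5).Group × (CoxeterMatrix.I 3).Group) := by
  have : Fact (Nat.Prime 5) := ⟨by norm_num⟩
  constructor
  · exact fun h => Equiv.Perm.not_isBeauvilleGroup_prod_dihedralGroup (m := 5) (p := 5)
      (by norm_num) (by norm_num) (by norm_num) <| h.of_mulEquiv <|
        (CoxeterMatrix.A.mulEquivPerm 4).prodCongr (CoxeterMatrix.I.mulEquivDihedralGroup 3)
  · exact fun h => Equiv.Perm.not_isBeauvilleGroup_prod_dihedralGroup (m := 6) (p := 5)
      (by norm_num) (by norm_num) (by norm_num) <| h.of_mulEquiv <|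
        (CoxeterMatrix.A.mulEquivPerm 5).prodCongr (CoxeterMatrix.I.mulEquivDihedralGroup 3)
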